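/- arXiv:2407.13716 — 2 statements merged into one kernel-verified Lean document; each statement's English description precedes it below -/
import Mathlib

section
/- Let n, d ≥ 1, let κ be a finite index set, and let (v_J)_{J ∈ κ} and (w_{(i,j),J})_{i,j ∈ [n], J ∈ κ} be vectors in ℂ^d. Suppose that Σ_{i ∈ [n]} (⟨w_{(i,j),J}, w_{(i,j'),J'}⟩)_{(j,J),(j',J')} ⪯ Id_n ⊗ G in the Loewner order, where G = (⟨v_J, v_{J'}⟩)_{J,J' ∈ κ} is the Gram matrix of (v_J) and Id_n ⊗ G is the block-diagonal matrix indexed by (j,J),(j',J') ∈ [n]×κ with entries δ_{j,j'} ⟨v_J, v_{J'}⟩. Then there exists a contraction A ∈ M_{dn,dn}(ℂ), with d×d blocks A(i,j) for i,j ∈ [n], such that A(i,j) v_J = w_{(i,j),J} for all i, j ∈ [n] and J ∈ κ. -/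
open scoped ComplexOrder

noncomputable section

/-- The ℓ2→ℓ2 operator norm of a complex matrix. -/
def opNorm {m n : Type*} [Fintype m] [Fintype n] [DecidableEq n] (A : Matrix m n ℂ) : ℝ :=
  ‖LinearMap.toContinuousLinearMap (Matrix.toEuclideanLin A)‖

/-- The `I`-th block of a matrix regarded as a block matrix. -/
def blockOf {p q : Type*} (X : Matrix (p × q) (p × q) ℂ) (I : p × p) : Matrix q q ℂ :=
  X.submatrix (fun k => (I.1, k)) (fun l => (I.2, l))

/-- The amplification `T_m` of a `t`-linear form on `M_n(ℂ)`. -/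
def ampl {n t m : ℕ} (T : MultilinearMap ℂ (fun _ : Fin t => Matrix (Fin n) (Fin n) ℂ) ℂ)
    (X : Fin t → Matrix (Fin n × Fin m) (Fin n × Fin m) ℂ) : Matrix (Fin m) (Fin m) ℂ :=
  ∑ I : Fin t → Fin n × Fin n,
    T (fun s => Matrix.single (I s).1 (I s).2 1) •
      ((List.finRange t).map (fun s => blockOf (X s) (I s))).prod

/-- The completely bounded norm of a `t`-linear form on `M_n(ℂ)`. -/
def cbNorm {n t : ℕ} (T : MultilinearMap ℂ (fun _ : Fin t => Matrix (Fin n) (Fin n) ℂ) ℂ) : ℝ :=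
  sSup {r : ℝ | ∃ (m : ℕ) (X : Fin t → Matrix (Fin n × Fin m) (Fin n × Fin m) ℂ),
    1 ≤ m ∧ (∀ s, opNorm (X s) ≤ 1) ∧ r = opNorm (ampl T X)}

/-- The matrix `A_0 (X_1 ⊗ Id_d) A_1 ⋯ A_{t-1} (X_t ⊗ Id_d) A_t`. -/
def faChain {n d t : ℕ} (ht : 1 ≤ t)
    (A0 : Matrix (Fin d) (Fin n × Fin d) ℂ)
    (A : Fin (t - 1) → Matrix (Fin n × Fin d) (Fin n × Fin d) ℂ)
    (At : Matrix (Fin n × Fin d) (Fin d) ℂ)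
    (X : Fin t → Matrix (Fin n) (Fin n) ℂ) : Matrix (Fin d) (Fin d) ℂ :=
  A0 * ((List.finRange (t - 1)).map (fun s =>
      Matrix.kroneckerMap (· * ·) (X (Fin.castLE (Nat.sub_le t 1) s))
        (1 : Matrix (Fin d) (Fin d) ℂ) * A s)).prod *
    Matrix.kroneckerMap (· * ·) (X ⟨t - 1, by omega⟩) (1 : Matrix (Fin d) (Fin d) ℂ) * At

/-- The factorization norm of a `t`-linear form on `M_n(ℂ)`. -/
def faNorm {n t : ℕ} (ht : 1 ≤ t)
    (T : MultilinearMap ℂ (fun _ : Fin t => Matrix (Fin n) (Fin n) ℂ) ℂ) : ℝ :=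
  sInf {w : ℝ |
    ∃ (d : ℕ) (u v : EuclideanSpace ℂ (Fin d))
      (A0 : Matrix (Fin d) (Fin n × Fin d) ℂ)
      (A : Fin (t - 1) → Matrix (Fin n × Fin d) (Fin n × Fin d) ℂ)
      (At : Matrix (Fin n × Fin d) (Fin d) ℂ),
      ‖u‖ ^ 2 = w ∧ ‖v‖ ^ 2 = w ∧
      opNorm A0 ≤ 1 ∧ (∀ s, opNorm (A s) ≤ 1) ∧ opNorm At ≤ 1 ∧
      ∀ X : Fin t → Matrix (Fin n) (Fin n) ℂ,
        T X = (inner ℂ u (Matrix.toEuclideanLin (faChain ht A0 A At X) v) : ℂ)}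


/-!
With `V_{(j,J)} = e_j ⊗ v_J` and `W_{(j,J)} = ∑ᵢ e_i ⊗ w_{(i,j),J}`, the hypothesis says that the
Gram matrix of the `W`'s is dominated by that of the `V`'s, i.e. `‖∑ c W‖ ≤ ‖∑ c V‖` for all
coefficients `c`. Hence `∑ c V ↦ ∑ c W` is a well-defined contraction on the span of the `V`'s;
precomposed with the orthogonal projection onto that span it becomes a contraction `A` of the
whole space with `A V = W`, which blockwise reads `A(i,j) v_J = w_{(i,j),J}`.
-/

open Matrix

section Contraction

variable {𝕜 E F M : Type*} [RCLike 𝕜] [NormedAddCommGroup E] [InnerProductSpace 𝕜 E]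
  [NormedAddCommGroup F] [NormedSpace 𝕜 F] [AddCommGroup M] [Module 𝕜 M]

theorem LinearMap.exists_contraction_comp_eq_of_norm_le (L : M →ₗ[𝕜] E) (K : M →ₗ[𝕜] F)
    [(range L).HasOrthogonalProjection] (hKL : ∀ c, ‖K c‖ ≤ ‖L c‖) :
    ∃ f : E →L[𝕜] F, ‖f‖ ≤ 1 ∧ ∀ c, f (L c) = K c := by
  obtain ⟨s, hs⟩ := L.rangeRestrict.exists_rightInverse_of_surjective L.range_rangeRestrict
  have hLs : ∀ y, L (s y) = y := fun y => congrArg Subtype.val (LinearMap.congr_fun hs y)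
  -- `s` is only some right inverse of `L`, but `ker L ⊆ ker K` makes `K ∘ s` independent of it.
  have hKs : ∀ c, K (s ⟨L c, mem_range_self L c⟩) = K c := by
    intro c
    rw [← sub_eq_zero, ← map_sub, ← norm_le_zero_iff]
    calc _ ≤ ‖L (s ⟨L c, _⟩ - c)‖ := hKL _
      _ = 0 := by simp [hLs]
  let g : range L →L[𝕜] F := (K ∘ₗ s).mkContinuous 1 fun y => by simpa [hLs] using hKL (s y)
  refine ⟨g ∘L (range L).orthogonalProjectionOnto, ?_, fun c => ?_⟩
  · exact (g.opNorm_comp_le _).trans <| mul_le_one₀ (mkContinuous_norm_le _ zero_le_one _)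
      (norm_nonneg _) (Submodule.orthogonalProjectionOnto_norm_le _)
  · simp [g, hKs,
      Submodule.orthogonalProjectionOnto_mem_subspace_eq_self ⟨L c, mem_range_self L c⟩]

end Contraction

section Gram

variable {𝕜 E F ι : Type*} [RCLike 𝕜] [NormedAddCommGroup E] [InnerProductSpace 𝕜 E]
  [NormedAddCommGroup F] [InnerProductSpace 𝕜 F] [Fintype ι]

theorem Matrix.norm_sum_smul_le_of_posSemidef_gram_sub {V : ι → E} {W : ι → F}
    (h : (gram 𝕜 V - gram 𝕜 W).PosSemidef) (c : ι → 𝕜) :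
    ‖∑ i, c i • W i‖ ≤ ‖∑ i, c i • V i‖ := by
  have hc := h.dotProduct_mulVec_nonneg c
  rw [sub_mulVec, dotProduct_sub, star_dotProduct_gram_mulVec, star_dotProduct_gram_mulVec,
    sub_nonneg, inner_self_eq_norm_sq_to_K, inner_self_eq_norm_sq_to_K] at hc
  exact (pow_le_pow_iff_left₀ (norm_nonneg _) (norm_nonneg _) two_ne_zero).1 (mod_cast hc)

theorem Matrix.exists_contraction_of_posSemidef_gram_sub {V : ι → E} {W : ι → F}
    (h : (gram 𝕜 V - gram 𝕜 W).PosSemidef) :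
    ∃ f : E →L[𝕜] F, ‖f‖ ≤ 1 ∧ ∀ i, f (V i) = W i := by
  obtain ⟨f, hf, hfVW⟩ := (Fintype.linearCombination 𝕜 V).exists_contraction_comp_eq_of_norm_le
    (Fintype.linearCombination 𝕜 W) fun c => by
      simpa only [Fintype.linearCombination_apply] using norm_sum_smul_le_of_posSemidef_gram_sub h c
  refine ⟨f, hf, fun i => ?_⟩
  classical
  simpa using hfVW (Pi.single i 1)

end Gram

section Blocks

variable {𝕜 p q : Type*} [RCLike 𝕜] [Fintype p] [Fintype q] [DecidableEq p]

/-- The vector `e_j ⊗ x`. -/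
def blockSingle (j : p) (x : EuclideanSpace 𝕜 q) : EuclideanSpace 𝕜 (p × q) :=
  WithLp.toLp 2 fun r => if r.1 = j then x r.2 else 0

/-- The vector `∑ i, e_i ⊗ y i`. -/
def blockStack (y : p → EuclideanSpace 𝕜 q) : EuclideanSpace 𝕜 (p × q) :=
  WithLp.toLp 2 fun r => y r.1 r.2

theorem inner_blockSingle (j j' : p) (x x' : EuclideanSpace 𝕜 q) :
    inner 𝕜 (blockSingle j x) (blockSingle j' x') = if j = j' then inner 𝕜 x x' else 0 := by
  rcases eq_or_ne j j' with rfl | hjj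
  · simp [blockSingle, PiLp.inner_apply, Fintype.sum_prod_type]
  · simp [blockSingle, PiLp.inner_apply, Fintype.sum_prod_type, hjj, hjj.symm]

omit [DecidableEq p] in
theorem inner_blockStack (y y' : p → EuclideanSpace 𝕜 q) :
    inner 𝕜 (blockStack y) (blockStack y') = ∑ i, inner 𝕜 (y i) (y' i) := by
  simp [blockStack, PiLp.inner_apply, Fintype.sum_prod_type]

theorem toEuclideanLin_blockOf [DecidableEq q] {A : Matrix (p × q) (p × q) ℂ} {j : p}
    {x : EuclideanSpace ℂ q} {y : p → EuclideanSpace ℂ q}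
    (h : toEuclideanLin A (blockSingle j x) = blockStack y) (i : p) :
    toEuclideanLin (blockOf A (i, j)) x = y i := by
  ext k
  have := congrArg (fun z => z (i, k)) h
  simpa [blockSingle, blockStack, blockOf, mulVec, dotProduct, Fintype.sum_prod_type] using this

omit [DecidableEq p] in
theorem opNorm_toEuclideanLin_symm [DecidableEq q]
    (f : EuclideanSpace ℂ q →L[ℂ] EuclideanSpace ℂ p) :
    opNorm (toEuclideanLin.symm (f : EuclideanSpace ℂ q →ₗ[ℂ] EuclideanSpace ℂ p)) = ‖f‖ := by
  rw [opNorm, LinearEquiv.apply_symm_apply, ← LinearMap.coe_toContinuousLinearMap_symm,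
    LinearEquiv.apply_symm_apply]

end Blocks

theorem exists_contraction_of_gram_le_general (n d : ℕ)
    (κ : Type) [Fintype κ]
    (v : κ → EuclideanSpace ℂ (Fin d))
    (w : Fin n → Fin n → κ → EuclideanSpace ℂ (Fin d))
    (h : (Matrix.kroneckerMap (· * ·) (1 : Matrix (Fin n) (Fin n) ℂ)
            (Matrix.of fun J J' : κ => (inner ℂ (v J) (v J') : ℂ)) -
          Matrix.of fun p q : Fin n × κ =>
            ∑ i : Fin n, (inner ℂ (w i p.1 p.2) (w i q.1 q.2) : ℂ)).PosSemidef) :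
    ∃ A : Matrix (Fin n × Fin d) (Fin n × Fin d) ℂ, opNorm A ≤ 1 ∧
      ∀ (i j : Fin n) (J : κ),
        Matrix.toEuclideanLin (blockOf A (i, j)) (v J) = w i j J := by
  let V : Fin n × κ → EuclideanSpace ℂ (Fin n × Fin d) := fun r => blockSingle r.1 (v r.2)
  let W : Fin n × κ → EuclideanSpace ℂ (Fin n × Fin d) := fun r =>
    blockStack fun i => w i r.1 r.2
  have hgram : gram ℂ V - gram ℂ W = kroneckerMap (· * ·) (1 : Matrix (Fin n) (Fin n) ℂ)
      (of fun J J' : κ => (inner ℂ (v J) (v J') : ℂ)) -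
      of fun r r' : Fin n × κ => ∑ i, (inner ℂ (w i r.1 r.2) (w i r'.1 r'.2) : ℂ) := by
    ext ⟨j, J⟩ ⟨j', J'⟩
    simp [V, W, gram_apply, inner_blockSingle, inner_blockStack, one_apply]
  obtain ⟨f, hf, hfVW⟩ := exists_contraction_of_posSemidef_gram_sub (hgram ▸ h)
  refine ⟨toEuclideanLin.symm f, (opNorm_toEuclideanLin_symm f).trans_le hf,
    fun i j J => toEuclideanLin_blockOf (y := fun i => w i j J) ?_ i⟩
  simpa only [V, W, LinearEquiv.apply_symm_apply, ContinuousLinearMap.coe_coe] using hfVW (j, J)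

/-- If the summed Gram matrix of the `w`'s is dominated by `Id_n ⊗ Gram(v)` in the Loewner
order, then there is a contraction `A ∈ M_{dn,dn}(ℂ)` whose blocks map the `v`'s to the
`w`'s. -/
theorem exists_contraction_of_gram_le (n d : ℕ) (hn : 1 ≤ n) (hd : 1 ≤ d)
    (κ : Type) [Fintype κ]
    (v : κ → EuclideanSpace ℂ (Fin d))
    (w : Fin n → Fin n → κ → EuclideanSpace ℂ (Fin d))
    (h : (Matrix.kroneckerMap (· * ·) (1 : Matrix (Fin n) (Fin n) ℂ)
            (Matrix.of fun J J' : κ => (inner ℂ (v J) (v J') : ℂ)) -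
          Matrix.of fun p q : Fin n × κ =>
            ∑ i : Fin n, (inner ℂ (w i p.1 p.2) (w i q.1 q.2) : ℂ)).PosSemidef) :
    ∃ A : Matrix (Fin n × Fin d) (Fin n × Fin d) ℂ, opNorm A ≤ 1 ∧
      ∀ (i j : Fin n) (J : κ),
        Matrix.toEuclideanLin (blockOf A (i, j)) (v J) = w i j J :=
  exists_contraction_of_gram_le_general n d κ v w h

end
end

section
/- Let n, t, d ≥ 1, let v ∈ ℂ^d, and for each s ∈ [t] let (v_I)_{I ∈ ([n]×[n])^s} be a family of vectors in ℂ^d. Then the following are equivalent: (1) there exist contractions A_1, …, A_t ∈ M_{dn,dn}(ℂ) such that v_I = A_{t-s+1}(I_1) A_{t-s+2}(I_2) ⋯ A_t(I_s) v for every s ∈ [t] and every I = (I_1, …, I_s) ∈ ([n]×[n])^s, where A(i,j) ∈ M_d(ℂ) denotes the (i,j)-th d×d block of A; (2) Σ_{i ∈ [n]} (⟨v_{(i,j)}, v_{(i,j')}⟩)_{j,j' ∈ [n]} ⪯ ‖v‖² · Id_n, and for every s ∈ [t−1], Σ_{i ∈ [n]} (⟨v_{(i,j)⌢J}, v_{(i,j')⌢J'}⟩)_{(j,J),(j',J')}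 ⪯ Id_n ⊗ (⟨v_J, v_{J'}⟩)_{J,J' ∈ ([n]×[n])^s}, where (i,j)⌢J denotes the concatenation of the index (i,j) with the multi-index J, and Id_n ⊗ G is the block-diagonal matrix with n copies of G. -/
/-!
Write `x⁽ʲ⁾ ∈ ℂⁿ ⊗ ℂᵈ` for the vector `x ∈ ℂᵈ` placed in the `j`-th block. With `V₀ = v`, the chain
condition says exactly that for every level `s < t` the matrix `A_{t-s}` sends `(V_s J)⁽ʲ⁾` to the
vector whose `i`-th block is `V_{s+1}((i,j)⌢J)`. Each level involves its own matrix, so the levels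
can be treated independently. By Douglas' lemma, prescribed values `w_p ↦ u_p` extend to a
contraction iff `‖∑ x_p u_p‖ ≤ ‖∑ x_p w_p‖` for all coefficients, i.e. iff
`Gram(w) - Gram(u) ⪰ 0`; the Gram matrix of the vectors `(V_s J)⁽ʲ⁾` is `Id_n ⊗ Gram(V_s)`, and that
of the images is the block sum in the statement.
-/

open scoped ComplexOrder

noncomputable section

open Matrix
open scoped InnerProductSpace

theorem LinearMap.exists_comp_eq_of_ker_le {K M N N' : Type*} [Field K] [AddCommGroup M]
    [Module K M] [AddCommGroup N] [Module K N] [AddCommGroup N'] [Module K N']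
    {ψ : M →ₗ[K] N} {φ : M →ₗ[K] N'} (h : LinearMap.ker ψ ≤ LinearMap.ker φ) :
    ∃ g : N →ₗ[K] N', g ∘ₗ ψ = φ := by
  obtain ⟨g, hg⟩ := LinearMap.exists_extend
    ((LinearMap.ker ψ).liftQ φ h ∘ₗ ψ.quotKerEquivRange.symm.toLinearMap)
  refine ⟨g, LinearMap.ext fun x => ?_⟩
  have := congr($hg ⟨ψ x, LinearMap.mem_range_self ψ x⟩)
  simpa [LinearMap.quotKerEquivRange_symm_apply_image] using this

section Contraction

variable {𝕜 E F P : Type*} [RCLike 𝕜] [NormedAddCommGroup E] [InnerProductSpace 𝕜 E]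
  [NormedAddCommGroup F] [InnerProductSpace 𝕜 F] [Fintype P]

theorem posSemidef_gram_sub_gram_iff (w : P → E) (u : P → F) :
    (gram 𝕜 w - gram 𝕜 u).PosSemidef ↔ ∀ x : P → 𝕜, ‖∑ p, x p • u p‖ ≤ ‖∑ p, x p • w p‖ := by
  have hquad : ∀ x : P → 𝕜, star x ⬝ᵥ (gram 𝕜 w - gram 𝕜 u) *ᵥ x
      = ((‖∑ p, x p • w p‖ ^ 2 - ‖∑ p, x p • u p‖ ^ 2 : ℝ) : 𝕜) := fun x => by
    rw [sub_mulVec, dotProduct_sub, star_dotProduct_gram_mulVec, star_dotProduct_gram_mulVec,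
      inner_self_eq_norm_sq_to_K, inner_self_eq_norm_sq_to_K]
    push_cast; rfl
  simp only [posSemidef_iff_dotProduct_mulVec, (isHermitian_gram 𝕜 w).sub (isHermitian_gram 𝕜 u),
    true_and, hquad, RCLike.ofReal_nonneg, sub_nonneg]
  exact forall_congr' fun x => sq_le_sq₀ (norm_nonneg _) (norm_nonneg _)

/-- Douglas' factorization lemma, for finitely many vectors. -/
theorem exists_contraction_map_iff (w : P → E) (u : P → F) :
    (∃ C : E →ₗ[𝕜] F, (∀ y, ‖C y‖ ≤ ‖y‖) ∧ ∀ p, C (w p) = u p) ↔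
      ∀ x : P → 𝕜, ‖∑ p, x p • u p‖ ≤ ‖∑ p, x p • w p‖ := by
  constructor
  · rintro ⟨C, hC, hCw⟩ x
    simpa [map_sum, map_smul, hCw] using hC (∑ p, x p • w p)
  · intro h
    set ψ := Fintype.linearCombination 𝕜 w
    set φ := Fintype.linearCombination 𝕜 u
    have hle : ∀ x, ‖φ x‖ ≤ ‖ψ x‖ := fun x => by
      simpa [ψ, φ, Fintype.linearCombination_apply] using h x
    obtain ⟨g, hg⟩ := LinearMap.exists_comp_eq_of_ker_le (ψ := ψ) (φ := φ) fun x hx => by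
      rw [LinearMap.mem_ker] at hx ⊢
      simpa [hx] using hle x
    have hgψ : ∀ x, g (ψ x) = φ x := fun x => congr($hg x)
    set K := LinearMap.range ψ
    refine ⟨g ∘ₗ K.starProjection.toLinearMap, fun y => ?_, fun p => ?_⟩
    · obtain ⟨x, hx⟩ := K.starProjection_apply_mem y
      calc ‖g (K.starProjection y)‖ = ‖φ x‖ := by rw [← hx, hgψ]
        _ ≤ ‖K.starProjection y‖ := hx ▸ hle x
        _ ≤ ‖y‖ := K.norm_starProjection_apply_le y
    · classical
      have hw : ψ (Pi.single p 1) = w p := by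
        simp [ψ, Fintype.linearCombination_apply_single]
      have hwK : K.starProjection (w p) = w p :=
        K.starProjection_eq_self_iff.mpr (hw ▸ LinearMap.mem_range_self ψ _)
      change g (K.starProjection (w p)) = u p
      rw [hwK, ← hw, hgψ]
      simp [φ, Fintype.linearCombination_apply_single]

end Contraction

theorem opNorm_le_one_iff {m m' : Type*} [Fintype m] [Fintype m'] [DecidableEq m]
    (A : Matrix m' m ℂ) :
    opNorm A ≤ 1 ↔ ∀ x : EuclideanSpace ℂ m, ‖toEuclideanLin A x‖ ≤ ‖x‖ := by
  simp [opNorm, ContinuousLinearMap.opNorm_le_iff zero_le_one]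

theorem exists_opNorm_le_one_iff_posSemidef {m m' P : Type*} [Fintype m] [DecidableEq m]
    [Fintype m'] [Fintype P] (w : P → EuclideanSpace ℂ m) (u : P → EuclideanSpace ℂ m') :
    (∃ C : Matrix m' m ℂ, opNorm C ≤ 1 ∧ ∀ p, toEuclideanLin C (w p) = u p) ↔
      (gram ℂ w - gram ℂ u).PosSemidef := by
  rw [posSemidef_gram_sub_gram_iff, ← exists_contraction_map_iff]
  constructor
  · rintro ⟨C, hC, hCw⟩
    exact ⟨toEuclideanLin C, (opNorm_le_one_iff C).mp hC, hCw⟩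
  · rintro ⟨C, hC, hCw⟩
    exact ⟨toEuclideanLin.symm C, by simpa [opNorm_le_one_iff] using hC, by simpa using hCw⟩

section Blocks

variable {ι κ : Type*}

def blockVec (y : ι → EuclideanSpace ℂ κ) : EuclideanSpace ℂ (ι × κ) :=
  WithLp.toLp 2 fun p => y p.1 p.2

theorem blockVec_inj {y z : ι → EuclideanSpace ℂ κ} : blockVec y = blockVec z ↔ y = z := by
  refine ⟨fun h => funext fun i => PiLp.ext fun k => congr($h (i, k)), fun h => h ▸ rfl⟩

theorem inner_blockVec [Fintype ι] [Fintype κ] (y z : ι → EuclideanSpace ℂ κ) :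
    ⟪blockVec y, blockVec z⟫_ℂ = ∑ i, ⟪y i, z i⟫_ℂ := by
  simp [blockVec, PiLp.inner_apply, Fintype.sum_prod_type]

theorem toEuclideanLin_blockVec_single [Fintype ι] [Fintype κ] [DecidableEq ι] [DecidableEq κ]
    (A : Matrix (ι × κ) (ι × κ) ℂ) (j : ι) (a : EuclideanSpace ℂ κ) :
    toEuclideanLin A (blockVec (Pi.single j a)) =
      blockVec fun i => toEuclideanLin (blockOf A (i, j)) a := by
  ext ⟨i, k⟩
  simp [blockVec, blockOf, toLpLin_apply, mulVec, dotProduct, Fintype.sum_prod_type,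
    Pi.single_apply, apply_ite WithLp.ofLp, ite_apply, mul_ite]

theorem inner_blockVec_single [Fintype ι] [DecidableEq ι] [Fintype κ] (j j' : ι)
    (a b : EuclideanSpace ℂ κ) :
    ⟪blockVec (Pi.single j a), blockVec (Pi.single j' b)⟫_ℂ = if j = j' then ⟪a, b⟫_ℂ else 0 := by
  rw [inner_blockVec, Finset.sum_eq_single j (fun i _ hi => by simp [hi]) (by simp),
    Pi.single_eq_same, Pi.single_apply]
  split_ifs <;> simp_all

theorem exists_blockContraction_iff [Fintype ι] [DecidableEq ι] [Fintype κ] [DecidableEq κ]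
    {P : Type*} [Fintype P] (col : P → ι) (x : P → EuclideanSpace ℂ κ)
    (y : ι → P → EuclideanSpace ℂ κ) :
    (∃ A : Matrix (ι × κ) (ι × κ) ℂ, opNorm A ≤ 1 ∧
        ∀ i p, toEuclideanLin (blockOf A (i, col p)) (x p) = y i p) ↔
      (of (fun p p' => if col p = col p' then ⟪x p, x p'⟫_ℂ else 0) -
        of fun p p' => ∑ i, ⟪y i p, y i p'⟫_ℂ).PosSemidef := by
  set w := fun p => blockVec (Pi.single (col p) (x p))
  set u := fun p => blockVec fun i => y i p
  have hgram_w : gram ℂ w = of fun p p' => if col p = col p' then ⟪x p, x p'⟫_ℂ else 0 := by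
    ext p p'
    simp [w, inner_blockVec_single]
  have hgram_u : gram ℂ u = of fun p p' => ∑ i, ⟪y i p, y i p'⟫_ℂ := by
    ext p p'
    simp [u, inner_blockVec]
  rw [← hgram_w, ← hgram_u, ← exists_opNorm_le_one_iff_posSemidef]
  refine exists_congr fun A => and_congr_right fun _ =>
    forall_comm.trans <| forall_congr' fun p => ?_
  simp [w, u, toEuclideanLin_blockVec_single, blockVec_inj, funext_iff]

end Blocks

theorem exists_fin_family_iff {M : Type*} {t : ℕ} (ht : 1 ≤ t) (P base : M → Prop)
    (step : ℕ → M → Prop) :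
    (∃ A : Fin t → M, (∀ k, P (A k)) ∧ base (A ⟨t - 1, by omega⟩) ∧
        ∀ s, 1 ≤ s → s ≤ t - 1 → step s (A ⟨t - 1 - s, by omega⟩)) ↔
      (∃ B, P B ∧ base B) ∧ ∀ s, 1 ≤ s → s ≤ t - 1 → ∃ B, P B ∧ step s B := by
  constructor
  · rintro ⟨A, hP, hbase, hstep⟩
    exact ⟨⟨_, hP _, hbase⟩, fun s h₁ h₂ => ⟨_, hP _, hstep s h₁ h₂⟩⟩
  · rintro ⟨⟨B₀, hP₀, hbase⟩, hstep⟩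
    choose B hPB hstepB using hstep
    have hstepB' : ∀ s s' h₁ h₂, s' = s → step s (B s' h₁ h₂) := by
      rintro s _ h₁ h₂ rfl
      exact hstepB _ h₁ h₂
    refine ⟨fun k => if hk : k.val = t - 1 then B₀ else B (t - 1 - k) (by omega) (by omega),
      fun k => ?_, by simpa using hbase, fun s h₁ h₂ => ?_⟩
    · dsimp only
      split_ifs
      exacts [hP₀, hPB _ _ _]
    · simp only [show t - 1 - s ≠ t - 1 by omega, ↓reduceDIte]
      exact hstepB' s _ _ _ (by omega)

section Chain

variable {ι κ : Type*} [Fintype κ] [DecidableEq κ] {t : ℕ}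

/-- The paper's `A_{t-s+1}(I_1) ⋯ A_t(I_s)`, with `Fin t` indexing `A_1, …, A_t` from `0`. -/
def chainProd (A : Fin t → Matrix (ι × κ) (ι × κ) ℂ) (s : ℕ) (hst : s ≤ t)
    (I : Fin s → ι × ι) : Matrix κ κ ℂ :=
  ((List.finRange s).map fun k => blockOf (A ⟨t - s + k.val, by omega⟩) (I k)).prod

theorem chainProd_one (ht : 1 ≤ t) (A : Fin t → Matrix (ι × κ) (ι × κ) ℂ)
    (I : Fin 1 → ι × ι) : chainProd A 1 ht I = blockOf (A ⟨t - 1, by omega⟩) (I 0) := by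
  simp [chainProd, List.finRange_succ]

theorem chainProd_succ (A : Fin t → Matrix (ι × κ) (ι × κ) ℂ) {s : ℕ} (hst : s + 1 ≤ t)
    (I : Fin (s + 1) → ι × ι) :
    chainProd A (s + 1) hst I =
      blockOf (A ⟨t - 1 - s, by omega⟩) (I 0) * chainProd A s (by omega) (Fin.tail I) := by
  simp only [chainProd, List.finRange_succ, List.map_cons, List.prod_cons, List.map_map]
  congr 3
  · ext; simp only [Fin.val_zero]; omega
  · funext k
    simp only [Function.comp_apply, Fin.val_succ, Fin.tail]
    congr 3
    omega

theorem chain_iff_steps (ht : 1 ≤ t) (A : Fin t → Matrix (ι × κ) (ι × κ) ℂ)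
    (v : EuclideanSpace ℂ κ) (V : (s : ℕ) → (Fin s → ι × ι) → EuclideanSpace ℂ κ) :
    (∀ (s : ℕ) (_ : 1 ≤ s) (hst : s ≤ t) (I : Fin s → ι × ι),
        V s I = toEuclideanLin (chainProd A s hst I) v) ↔
      (∀ i j, toEuclideanLin (blockOf (A ⟨t - 1, by omega⟩) (i, j)) v = V 1 fun _ => (i, j)) ∧
      ∀ s, 1 ≤ s → s ≤ t - 1 → ∀ i (p : ι × (Fin s → ι × ι)),
        toEuclideanLin (blockOf (A ⟨t - 1 - s, by omega⟩) (i, p.1)) (V s p.2) =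
          V (s + 1) (Fin.cons (i, p.1) p.2) := by
  constructor
  · intro h
    refine ⟨fun i j => ?_, fun s hs1 hst i p => ?_⟩
    · rw [h 1 le_rfl ht, chainProd_one]
    · rw [h (s + 1) (by omega) (by omega), chainProd_succ, toLpLin_mul_same,
        LinearMap.comp_apply, Fin.tail_cons, Fin.cons_zero, ← h s hs1 (by omega)]
  · rintro ⟨hbase, hstep⟩ s hs1
    induction s, hs1 using Nat.le_induction with
    | base =>
      intro hst I
      rw [chainProd_one, hbase]
      exact congrArg (V 1) (funext fun k => by rw [Subsingleton.elim k 0])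
    | succ s hs ih =>
      intro hst I
      rw [chainProd_succ, toLpLin_mul_same, LinearMap.comp_apply, ← ih (by omega) (Fin.tail I),
        hstep s hs (by omega) (I 0).1 ((I 0).2, Fin.tail I)]
      simp only [Prod.mk.eta, Fin.cons_self_tail]

theorem exists_chain_iff [Fintype ι] [DecidableEq ι] (ht : 1 ≤ t) (v : EuclideanSpace ℂ κ)
    (V : (s : ℕ) → (Fin s → ι × ι) → EuclideanSpace ℂ κ) :
    (∃ A : Fin t → Matrix (ι × κ) (ι × κ) ℂ, (∀ k, opNorm (A k) ≤ 1) ∧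
        ∀ (s : ℕ) (_ : 1 ≤ s) (hst : s ≤ t) (I : Fin s → ι × ι),
          V s I = toEuclideanLin (chainProd A s hst I) v) ↔
      (∃ B : Matrix (ι × κ) (ι × κ) ℂ, opNorm B ≤ 1 ∧
          ∀ i j, toEuclideanLin (blockOf B (i, j)) v = V 1 fun _ => (i, j)) ∧
        ∀ s, 1 ≤ s → s ≤ t - 1 → ∃ B : Matrix (ι × κ) (ι × κ) ℂ, opNorm B ≤ 1 ∧
          ∀ i (p : ι × (Fin s → ι × ι)),
            toEuclideanLin (blockOf B (i, p.1)) (V s p.2) = V (s + 1) (Fin.cons (i, p.1) p.2) := by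
  simp_rw [chain_iff_steps ht]
  exact exists_fin_family_iff ht (fun B => opNorm B ≤ 1)
    (fun B => ∀ i j, toEuclideanLin (blockOf B (i, j)) v = V 1 fun _ => (i, j))
    fun s B => ∀ i (p : ι × (Fin s → ι × ι)),
      toEuclideanLin (blockOf B (i, p.1)) (V s p.2) = V (s + 1) (Fin.cons (i, p.1) p.2)

end Chain

/-- A family of vectors `(v_I)_{I ∈ ([n]×[n])^s}`, `s ∈ [t]`, arises from a chain of
contractions `A_1, …, A_t` applied to `v` (i.e. `v_I = A_{t-s+1}(I_1)⋯A_t(I_s) v`) if and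
only if the corresponding Gram-matrix Loewner inequalities hold. -/
theorem chain_iff_gram (n t d : ℕ) (ht : 1 ≤ t)
    (v : EuclideanSpace ℂ (Fin d))
    (V : (s : ℕ) → (Fin s → Fin n × Fin n) → EuclideanSpace ℂ (Fin d)) :
    (∃ A : Fin t → Matrix (Fin n × Fin d) (Fin n × Fin d) ℂ,
        (∀ s, opNorm (A s) ≤ 1) ∧
        ∀ (s : ℕ) (hs1 : 1 ≤ s) (hst : s ≤ t) (I : Fin s → Fin n × Fin n),
          V s I = Matrix.toEuclideanLin
            (((List.finRange s).map (fun k =>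
              blockOf (A ⟨t - s + k.val, by have := k.2; omega⟩) (I k))).prod) v) ↔
    ((((‖v‖ ^ 2 : ℂ) • (1 : Matrix (Fin n) (Fin n) ℂ)) -
        Matrix.of fun j j' : Fin n =>
          ∑ i : Fin n,
            (inner ℂ (V 1 (fun _ => (i, j))) (V 1 (fun _ => (i, j'))) : ℂ)).PosSemidef ∧
      ∀ s : ℕ, 1 ≤ s → s ≤ t - 1 →
        (Matrix.kroneckerMap (· * ·) (1 : Matrix (Fin n) (Fin n) ℂ)
            (Matrix.of fun J J' : Fin s → Fin n × Fin n =>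
              (inner ℂ (V s J) (V s J') : ℂ)) -
          Matrix.of fun p q : Fin n × (Fin s → Fin n × Fin n) =>
            ∑ i : Fin n, (inner ℂ (V (s + 1) (Fin.cons (i, p.1) p.2))
              (V (s + 1) (Fin.cons (i, q.1) q.2)) : ℂ)).PosSemidef) := by
  refine (exists_chain_iff ht v V).trans <| and_congr ?_ (forall₃_congr fun s _ _ => ?_)
  · refine (exists_blockContraction_iff (fun j => j) (fun _ => v)
      fun i j => V 1 fun _ => (i, j)).trans ?_
    congr! 2
    ext j j'
    simp [one_apply, inner_self_eq_norm_sq_to_K]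
  · refine (exists_blockContraction_iff Prod.fst (fun p => V s p.2)
      fun i p => V (s + 1) (Fin.cons (i, p.1) p.2)).trans ?_
    congr! 2
    ext p p'
    simp [kroneckerMap_apply, one_apply]

end
end
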